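/- arXiv:1805.11693 — 2 statements merged into one kernel-verified Lean document; each statement's English description precedes it below -/
import Mathlib

section
/- Let p be a prime and let G₁ and G₂ be finite abelian p-groups of the same order. Then G₁ and G₂ are isomorphic if and only if ψ(G₁) = ψ(G₂). -/
/-!
An element of order `p ^ v` with `v ≤ K` satisfies `p ^ v + (p - 1) * ∑_{v ≤ k < K} p ^ k = p ^ K`.
Summing over a group `G` of exponent dividing `p ^ K` gives
`ψ(G) + (p - 1) * ∑_{k < K} p ^ k * |Ω_k(G)| = |G| * p ^ K`, where `Ω_k(G)` is the kernel of
`x ↦ x ^ p ^ k`. In an abelian `p`-group the `|Ω_k(G)|` are powers of `p` increasing with `k`, and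
such a sequence is determined by its weighted sum: at the top index where two of them differ, the
larger term dominates everything below it. Hence `ψ` and `|G|` determine all `|Ω_k(G)|`.
Finally, if `G ≃ ∏ᵢ ℤ/p^{eᵢ}` then `|Ω_k(G)| = p ^ ∑ᵢ min(eᵢ, k)`, and the second differences of
`k ↦ ∑ᵢ min(eᵢ, k)` count the indices with `eᵢ = k`, which recovers `G` up to isomorphism.
-/

/-- `psi G` is the sum of the orders of all elements of the finite group `G`. -/
noncomputable def psi (G : Type*) [Monoid G] [Fintype G] : ℕ := ∑ a : G, orderOf a

open Finset

lemma psi_congr {G H : Type*} [Monoid G] [Monoid H] [Fintype G] [Fintype H] (e : G ≃* H) :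
    psi G = psi H :=
  Fintype.sum_equiv e.toEquiv _ _ fun a => (e.orderOf_eq a).symm

lemma pow_add_sub_one_mul_sum_ite_le {p v K : ℕ} (hp : 1 ≤ p) (hvK : v ≤ K) :
    p ^ v + (p - 1) * ∑ k ∈ range K, (if v ≤ k then p ^ k else 0) = p ^ K := by
  induction K, hvK using Nat.le_induction with
  | base => rw [sum_eq_zero fun k hk => if_neg (by simpa using hk), mul_zero, add_zero]
  | succ K hvK ih =>
    obtain ⟨q, rfl⟩ : ∃ q, p = q + 1 := ⟨p - 1, by omega⟩
    rw [sum_range_succ, if_pos hvK, mul_add, ← add_assoc, ih]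
    simp only [add_tsub_cancel_right]
    ring

lemma orderOf_add_sub_one_mul_sum_ite {G : Type*} [Monoid G] [DecidableEq G] {p K : ℕ}
    (hp : p.Prime) {a : G} (ha : a ^ p ^ K = 1) :
    orderOf a + (p - 1) * ∑ k ∈ range K, (if a ^ p ^ k = 1 then p ^ k else 0) = p ^ K := by
  obtain ⟨v, hvK, hv⟩ := (Nat.dvd_prime_pow hp).mp (orderOf_dvd_of_pow_eq_one ha)
  have hpow : ∀ k, a ^ p ^ k = 1 ↔ v ≤ k := fun k => by
    rw [← orderOf_dvd_iff_pow_eq_one, hv, Nat.pow_dvd_pow_iff_le_right hp.one_lt]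
  simp only [hpow, hv]
  exact pow_add_sub_one_mul_sum_ite_le hp.pos hvK

theorem psi_add_sub_one_mul_sum_card {G : Type*} [Monoid G] [Fintype G] {p K : ℕ}
    (hp : p.Prime) (hG : ∀ a : G, a ^ p ^ K = 1) :
    psi G + (p - 1) * ∑ k ∈ range K, p ^ k * Nat.card {a : G // a ^ p ^ k = 1}
      = Nat.card G * p ^ K := by
  classical
  have hcount : ∀ k, p ^ k * Nat.card {a : G // a ^ p ^ k = 1}
      = ∑ a : G, if a ^ p ^ k = 1 then p ^ k else 0 := fun k => by
    rw [sum_ite, sum_const_zero, add_zero, sum_const, smul_eq_mul, Nat.card_eq_fintype_card,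
      Fintype.card_subtype, mul_comm]
  calc psi G + (p - 1) * ∑ k ∈ range K, p ^ k * Nat.card {a : G // a ^ p ^ k = 1}
      = ∑ a : G, (orderOf a + (p - 1) * ∑ k ∈ range K, if a ^ p ^ k = 1 then p ^ k else 0) := by
        simp only [hcount]
        rw [psi, sum_comm, mul_sum, sum_add_distrib]
    _ = ∑ _a : G, p ^ K := sum_congr rfl fun a _ => orderOf_add_sub_one_mul_sum_ite hp (hG a)
    _ = Nat.card G * p ^ K := by rw [sum_const, card_univ, smul_eq_mul, Nat.card_eq_fintype_card]

lemma sum_range_pow_mul_lt_of_lt {p n : ℕ} (hp : 2 ≤ p) {C₁ C₂ : ℕ → ℕ} (hC₁ : Monotone C₁)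
    (h₁ : ∃ c, C₁ n = p ^ c) (h₂ : ∃ c, C₂ n = p ^ c) (hlt : C₁ n < C₂ n) :
    ∑ k ∈ range (n + 1), p ^ k * C₁ k < ∑ k ∈ range (n + 1), p ^ k * C₂ k := by
  obtain ⟨c₁, hc₁⟩ := h₁
  obtain ⟨c₂, hc₂⟩ := h₂
  have hstep : p * C₁ n ≤ C₂ n := by
    rw [hc₁, hc₂] at hlt ⊢
    rw [← pow_succ']
    exact Nat.pow_le_pow_right (by omega) ((Nat.pow_lt_pow_iff_right (by omega)).mp hlt)
  calc ∑ k ∈ range (n + 1), p ^ k * C₁ k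
      ≤ ∑ k ∈ range (n + 1), p ^ k * C₁ n :=
        sum_le_sum fun k hk => Nat.mul_le_mul_left _ (hC₁ (Nat.lt_succ_iff.mp (mem_range.mp hk)))
    _ = (∑ k ∈ range (n + 1), p ^ k) * C₁ n := (sum_mul ..).symm
    _ < p ^ (n + 1) * C₁ n :=
        Nat.mul_lt_mul_of_pos_right (Nat.geomSum_lt hp fun k hk => mem_range.mp hk)
          (hc₁ ▸ pow_pos (by omega) c₁)
    _ = p ^ n * (p * C₁ n) := by ring
    _ ≤ p ^ n * C₂ n := Nat.mul_le_mul_left _ hstep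
    _ ≤ ∑ k ∈ range (n + 1), p ^ k * C₂ k :=
        single_le_sum (f := fun k => p ^ k * C₂ k) (fun _ _ => Nat.zero_le _)
          (self_mem_range_succ n)

theorem eq_of_sum_range_pow_mul_eq {p : ℕ} (hp : 2 ≤ p) {C₁ C₂ : ℕ → ℕ}
    (hC₁ : Monotone C₁) (hC₂ : Monotone C₂)
    (hC₁p : ∀ k, ∃ c, C₁ k = p ^ c) (hC₂p : ∀ k, ∃ c, C₂ k = p ^ c) {n : ℕ}
    (h : ∑ k ∈ range n, p ^ k * C₁ k = ∑ k ∈ range n, p ^ k * C₂ k) :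
    ∀ k < n, C₁ k = C₂ k := by
  induction n with
  | zero => simp
  | succ n ih =>
    have htop : C₁ n = C₂ n := by
      rcases lt_trichotomy (C₁ n) (C₂ n) with hlt | heq | hgt
      · exact absurd h (sum_range_pow_mul_lt_of_lt hp hC₁ (hC₁p n) (hC₂p n) hlt).ne
      · exact heq
      · exact absurd h (sum_range_pow_mul_lt_of_lt hp hC₂ (hC₂p n) (hC₁p n) hgt).ne'
    rw [sum_range_succ, sum_range_succ, htop, Nat.add_right_cancel_iff] at h
    intro k hk
    rcases Nat.lt_succ_iff_lt_or_eq.mp hk with hk | rfl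
    · exact ih h k hk
    · exact htop

lemma card_ker_powMonoidHom_congr {G H : Type*} [CommGroup G] [CommGroup H] (e : G ≃* H) (n : ℕ) :
    Nat.card (powMonoidHom n : G →* G).ker = Nat.card (powMonoidHom n : H →* H).ker :=
  Nat.card_congr <| e.toEquiv.subtypeEquiv fun a => by
    simp only [MonoidHom.mem_ker, powMonoidHom_apply, MulEquiv.toEquiv_eq_coe, EquivLike.coe_coe,
      ← map_pow, MulEquiv.map_eq_one_iff]

lemma card_ker_powMonoidHom_pi {ι : Type*} [Fintype ι] {G : ι → Type*} [∀ i, CommGroup (G i)]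
    (n : ℕ) :
    Nat.card (powMonoidHom n : (∀ i, G i) →* ∀ i, G i).ker
      = ∏ i, Nat.card (powMonoidHom n : G i →* G i).ker := by
  rw [← Nat.card_pi]
  exact Nat.card_congr <| (Equiv.subtypeEquivRight fun a => by
    simp only [MonoidHom.mem_ker, powMonoidHom_apply, funext_iff, Pi.pow_apply, Pi.one_apply]).trans
    Equiv.subtypePiEquivPi

lemma Nat.gcd_pow_pow_eq_pow_min (p a b : ℕ) : Nat.gcd (p ^ a) (p ^ b) = p ^ min a b := by
  rcases le_total a b with h | h
  · rw [Nat.gcd_eq_left (pow_dvd_pow p h), min_eq_left h]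
  · rw [Nat.gcd_eq_right (pow_dvd_pow p h), min_eq_right h]

lemma card_ker_powMonoidHom_zmod_pow {p : ℕ} (hp : p.Prime) (e k : ℕ) :
    Nat.card (powMonoidHom (p ^ k) : Multiplicative (ZMod (p ^ e)) →* _).ker = p ^ min e k := by
  have : NeZero (p ^ e) := ⟨pow_ne_zero e hp.ne_zero⟩
  rw [IsCyclic.card_powMonoidHom_ker, Nat.card_congr Multiplicative.toAdd, Nat.card_zmod,
    Nat.gcd_pow_pow_eq_pow_min]

lemma card_ker_powMonoidHom_pi_zmod_pow {ι : Type*} [Fintype ι] {p : ℕ} (hp : p.Prime)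
    (e : ι → ℕ) (k : ℕ) :
    Nat.card (powMonoidHom (p ^ k) :
        (∀ i, Multiplicative (ZMod (p ^ e i))) →* ∀ i, Multiplicative (ZMod (p ^ e i))).ker
      = p ^ ∑ i, min (e i) k := by
  simp only [card_ker_powMonoidHom_pi, card_ker_powMonoidHom_zmod_pow hp, prod_pow_eq_pow_sum]

lemma monotone_card_ker_powMonoidHom_pow {G : Type*} [CommGroup G] [Finite G] (p : ℕ) :
    Monotone fun k => Nat.card (powMonoidHom (p ^ k) : G →* G).ker := by
  refine monotone_nat_of_le_succ fun k => Subgroup.card_le_of_le fun a ha => ?_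
  rw [MonoidHom.mem_ker, powMonoidHom_apply] at ha ⊢
  rw [pow_succ, pow_mul, ha, one_pow]

lemma card_ker_powMonoidHom_of_card_dvd {G : Type*} [CommGroup G] [Finite G] {n : ℕ}
    (h : Nat.card G ∣ n) : Nat.card (powMonoidHom n : G →* G).ker = Nat.card G := by
  obtain ⟨m, rfl⟩ := h
  rw [show (powMonoidHom _ : G →* G).ker = ⊤ from eq_top_iff.mpr fun a _ => by
    rw [MonoidHom.mem_ker, powMonoidHom_apply, pow_mul, pow_card_eq_one', one_pow],
    Subgroup.card_top]

lemma IsPGroup.exists_card_ker_powMonoidHom_eq_pow {G : Type*} [CommGroup G] [Finite G] {p : ℕ}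
    [Fact p.Prime] (hG : IsPGroup p G) (n : ℕ) :
    ∃ c, Nat.card (powMonoidHom n : G →* G).ker = p ^ c :=
  IsPGroup.iff_card.mp (hG.to_subgroup _)

lemma IsPGroup.exists_mulEquiv_pi_zmod {G : Type*} [CommGroup G] [Finite G] {p : ℕ}
    [Fact p.Prime] (hG : IsPGroup p G) :
    ∃ (ι : Type) (_ : Fintype ι) (e : ι → ℕ),
      (∀ i, 0 < e i) ∧ Nonempty (G ≃* ∀ i, Multiplicative (ZMod (p ^ e i))) := by
  obtain ⟨ι, _, n, hn, ⟨φ⟩⟩ := CommGroup.equiv_prod_multiplicative_zmod_of_finite G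
  have hpow : ∀ i, ∃ e, n i = p ^ e := fun i => by
    have : NeZero (n i) := ⟨by have := hn i; omega⟩
    have := (hG.of_equiv φ).of_surjective (Pi.evalMonoidHom _ i) (Function.surjective_eval i)
    obtain ⟨e, he⟩ := IsPGroup.iff_card.mp this
    exact ⟨e, by rwa [Nat.card_congr Multiplicative.toAdd, Nat.card_zmod] at he⟩
  choose e he using hpow
  obtain rfl : n = fun i => p ^ e i := funext he
  refine ⟨ι, inferInstance, e, fun i => Nat.pos_of_ne_zero fun h0 => ?_, ⟨φ⟩⟩
  simpa [h0] using hn i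

lemma card_filter_eq_add_one_eq {ι : Type*} [Fintype ι] (e : ι → ℕ) (v : ℕ) :
    (#{i | e i = v + 1} : ℤ)
      = 2 * ((∑ i, min (e i) (v + 1) : ℕ) : ℤ) - ((∑ i, min (e i) v : ℕ) : ℤ)
        - ((∑ i, min (e i) (v + 2) : ℕ) : ℤ) := by
  push_cast
  rw [card_filter, mul_sum, ← sum_sub_distrib, ← sum_sub_distrib]
  push_cast
  refine sum_congr rfl fun i _ => ?_
  split_ifs <;> omega

theorem exists_equiv_apply_eq_of_sum_min_eq {ι₁ ι₂ : Type*} [Fintype ι₁] [Fintype ι₂]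
    {e₁ : ι₁ → ℕ} {e₂ : ι₂ → ℕ} (he₁ : ∀ i, 0 < e₁ i) (he₂ : ∀ j, 0 < e₂ j)
    (h : ∀ k, ∑ i, min (e₁ i) k = ∑ j, min (e₂ j) k) :
    ∃ σ : ι₁ ≃ ι₂, ∀ i, e₂ (σ i) = e₁ i := by
  classical
  have hfibre : ∀ v, Fintype.card {i // e₁ i = v} = Fintype.card {j // e₂ j = v} := by
    rintro (_ | v)
    · rw [Fintype.card_eq_zero_iff.mpr ⟨fun ⟨i, hi⟩ => (he₁ i).ne' hi⟩,
        Fintype.card_eq_zero_iff.mpr ⟨fun ⟨j, hj⟩ => (he₂ j).ne' hj⟩]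
    · rw [Fintype.card_subtype, Fintype.card_subtype, ← Nat.cast_inj (R := ℤ),
        card_filter_eq_add_one_eq, card_filter_eq_add_one_eq, h v, h (v + 1), h (v + 2)]
  exact ⟨Equiv.ofFiberEquiv fun v => Fintype.equivOfCardEq (hfibre v),
    Equiv.ofFiberEquiv_map _⟩

def MulEquiv.piCongrLeft {ι ι' : Type*} (M : ι' → Type*) [∀ j, Mul (M j)] (e : ι ≃ ι') :
    (∀ i, M (e i)) ≃* ∀ j, M j :=
  MulEquiv.symm { Equiv.piCongrLeft' M e.symm with map_mul' := fun _ _ => rfl }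

theorem card_ker_powMonoidHom_eq_of_psi_eq {G₁ G₂ : Type*} [CommGroup G₁] [CommGroup G₂]
    [Fintype G₁] [Fintype G₂] {p : ℕ} [hp : Fact p.Prime] (hp₁ : IsPGroup p G₁)
    (hp₂ : IsPGroup p G₂) (hcard : Nat.card G₁ = Nat.card G₂) (hpsi : psi G₁ = psi G₂) (k : ℕ) :
    Nat.card (powMonoidHom (p ^ k) : G₁ →* G₁).ker
      = Nat.card (powMonoidHom (p ^ k) : G₂ →* G₂).ker := by
  obtain ⟨K, hK⟩ := IsPGroup.iff_card.mp hp₁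
  have hexp₁ : ∀ a : G₁, a ^ p ^ K = 1 := fun a => by rw [← hK]; exact pow_card_eq_one'
  have hexp₂ : ∀ a : G₂, a ^ p ^ K = 1 := fun a => by rw [← hK, hcard]; exact pow_card_eq_one'
  rcases lt_or_ge k K with hk | hk
  · have hsum : ∑ k ∈ range K, p ^ k * Nat.card (powMonoidHom (p ^ k) : G₁ →* G₁).ker
        = ∑ k ∈ range K, p ^ k * Nat.card (powMonoidHom (p ^ k) : G₂ →* G₂).ker := by
      have h₁ := psi_add_sub_one_mul_sum_card hp.out hexp₁
      rw [hpsi, hcard, ← psi_add_sub_one_mul_sum_card hp.out hexp₂] at h₁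
      exact Nat.eq_of_mul_eq_mul_left (Nat.sub_pos_of_lt hp.out.one_lt) (Nat.add_left_cancel h₁)
    exact eq_of_sum_range_pow_mul_eq hp.out.two_le (monotone_card_ker_powMonoidHom_pow p)
      (monotone_card_ker_powMonoidHom_pow p) (fun _ => hp₁.exists_card_ker_powMonoidHom_eq_pow _)
      (fun _ => hp₂.exists_card_ker_powMonoidHom_eq_pow _) hsum k hk
  · have hdvd : p ^ K ∣ p ^ k := pow_dvd_pow p hk
    rw [card_ker_powMonoidHom_of_card_dvd (hK ▸ hdvd),
      card_ker_powMonoidHom_of_card_dvd (hcard ▸ hK ▸ hdvd), hcard]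

theorem IsPGroup.nonempty_mulEquiv_of_card_ker_powMonoidHom_eq {G₁ G₂ : Type*} [CommGroup G₁]
    [CommGroup G₂] [Finite G₁] [Finite G₂] {p : ℕ} [hp : Fact p.Prime] (hp₁ : IsPGroup p G₁)
    (hp₂ : IsPGroup p G₂)
    (h : ∀ k, Nat.card (powMonoidHom (p ^ k) : G₁ →* G₁).ker
      = Nat.card (powMonoidHom (p ^ k) : G₂ →* G₂).ker) :
    Nonempty (G₁ ≃* G₂) := by
  obtain ⟨ι₁, _, e₁, he₁, ⟨φ₁⟩⟩ := hp₁.exists_mulEquiv_pi_zmod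
  obtain ⟨ι₂, _, e₂, he₂, ⟨φ₂⟩⟩ := hp₂.exists_mulEquiv_pi_zmod
  have hsum : ∀ k, ∑ i, min (e₁ i) k = ∑ j, min (e₂ j) k := fun k => by
    have hk := h k
    rw [card_ker_powMonoidHom_congr φ₁, card_ker_powMonoidHom_congr φ₂,
      card_ker_powMonoidHom_pi_zmod_pow hp.out, card_ker_powMonoidHom_pi_zmod_pow hp.out] at hk
    exact Nat.pow_right_injective hp.out.two_le hk
  obtain ⟨σ, hσ⟩ := exists_equiv_apply_eq_of_sum_min_eq he₁ he₂ hsum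
  obtain rfl : e₁ = fun i => e₂ (σ i) := (funext hσ).symm
  exact ⟨φ₁.trans <|
    (MulEquiv.piCongrLeft (fun j => Multiplicative (ZMod (p ^ e₂ j))) σ).trans φ₂.symm⟩

theorem abelian_p_groups_iso_iff_psi_eq (p : ℕ) (hp : p.Prime)
    (G₁ G₂ : Type*) [CommGroup G₁] [CommGroup G₂] [Fintype G₁] [Fintype G₂]
    (hp₁ : IsPGroup p G₁) (hp₂ : IsPGroup p G₂)
    (hcard : Fintype.card G₁ = Fintype.card G₂) :
    Nonempty (G₁ ≃* G₂) ↔ psi G₁ = psi G₂ := by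
  have : Fact p.Prime := ⟨hp⟩
  refine ⟨fun ⟨e⟩ => psi_congr e, fun hpsi => ?_⟩
  rw [← Nat.card_eq_fintype_card, ← Nat.card_eq_fintype_card] at hcard
  exact hp₁.nonempty_mulEquiv_of_card_ker_powMonoidHom_eq hp₂
    (card_ker_powMonoidHom_eq_of_psi_eq hp₁ hp₂ hcard hpsi)
end

section
/- Let p be a prime. Then ψ(Z_p⁴) = p⁵ − p + 1 < ψ(Z_p × Z_p × Z_{p²}) = p⁶ − p⁵ + p⁴ − p + 1 < ψ(Z_{p²} × Z_{p²}) = p⁶ − p⁴ + p³ − p + 1 < ψ(Z_p × Z_{p³}) = p⁷ − p⁶ + p⁵ − p⁴ + p³ − p + 1 < ψ(Z_{p⁴}) = p⁸ − p⁷ + p⁶ − p⁵ + p⁴ − p³ + p² − p + 1. -/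
open Finset

theorem card_filter_pow_eq_one_prod {G H : Type*} [Monoid G] [Monoid H] [Fintype G] [Fintype H]
    [DecidableEq G] [DecidableEq H] (d : ℕ) :
    #{x : G × H | x ^ d = 1} = #{x : G | x ^ d = 1} * #{x : H | x ^ d = 1} := by
  rw [← card_product, ← filter_product, univ_product_univ]
  simp only [Prod.ext_iff, Prod.pow_fst, Prod.pow_snd, Prod.fst_one, Prod.snd_one]

theorem IsCyclic.card_filter_pow_eq_one {G : Type*} [CommGroup G] [Fintype G] [DecidableEq G]
    [IsCyclic G] (d : ℕ) : #{x : G | x ^ d = 1} = (Fintype.card G).gcd d := by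
  rw [← Nat.card_eq_fintype_card, ← IsCyclic.card_powMonoidHom_ker, ← Fintype.card_subtype,
    ← Nat.card_eq_fintype_card]
  exact Nat.card_congr (Equiv.subtypeEquivRight fun x => by simp)

theorem Nat.gcd_pow_pow (p m k : ℕ) : (p ^ m).gcd (p ^ k) = p ^ min m k := by
  rcases le_total m k with h | h
  · rw [min_eq_left h, Nat.gcd_eq_left (pow_dvd_pow p h)]
  · rw [min_eq_right h, Nat.gcd_eq_right (pow_dvd_pow p h)]

theorem card_filter_pow_prime_pow_eq_one_zmod (p m k : ℕ) [NeZero (p ^ m)] :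
    #{x : Multiplicative (ZMod (p ^ m)) | x ^ p ^ k = 1} = p ^ min m k := by
  rw [IsCyclic.card_filter_pow_eq_one, Fintype.card_multiplicative, ZMod.card, Nat.gcd_pow_pow]

theorem card_filter_pow_prime_pow_eq_one_zmod_self (p k : ℕ) [NeZero p] :
    #{x : Multiplicative (ZMod p) | x ^ p ^ k = 1} = p ^ min 1 k := by
  rw [IsCyclic.card_filter_pow_eq_one, Fintype.card_multiplicative, ZMod.card]
  simpa using Nat.gcd_pow_pow p 1 k

theorem cast_orderOf_eq_one_add_sum {G : Type*} [Monoid G] [DecidableEq G] {p n : ℕ}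
    (hp : p.Prime) {x : G} (hx : x ^ p ^ n = 1) :
    (orderOf x : ℤ) = 1 + ∑ k ∈ range n with x ^ p ^ k ≠ 1, ((p : ℤ) ^ (k + 1) - p ^ k) := by
  obtain ⟨j, hjn, hj⟩ := (Nat.dvd_prime_pow hp).mp (orderOf_dvd_of_pow_eq_one hx)
  have hfilter : {k ∈ range n | x ^ p ^ k ≠ 1} = range j := by
    ext k
    rw [mem_filter, mem_range, mem_range, ne_eq, ← orderOf_dvd_iff_pow_eq_one, hj,
      Nat.pow_dvd_pow_iff_le_right hp.one_lt]
    omega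
  rw [hfilter, sum_range_sub (fun k => (p : ℤ) ^ k), hj]
  push_cast
  ring

theorem cast_psi_eq_of_card_eq_prime_pow {G : Type*} [Group G] [Fintype G] [DecidableEq G]
    {p n : ℕ} (hp : p.Prime) (hG : Fintype.card G = p ^ n) :
    (psi G : ℤ) = p ^ n + ∑ k ∈ range n,
      ((p : ℤ) ^ (k + 1) - p ^ k) * (p ^ n - #{x : G | x ^ p ^ k = 1}) := by
  have hx (x : G) : x ^ p ^ n = 1 := hG ▸ pow_card_eq_one
  have hcompl (k : ℕ) :
      (#{x : G | x ^ p ^ k ≠ 1} : ℤ) = p ^ n - #{x : G | x ^ p ^ k = 1} := by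
    rw [eq_sub_iff_add_eq, add_comm]
    exact_mod_cast (card_filter_add_card_filter_not _).trans (by rw [card_univ, hG])
  calc (psi G : ℤ)
      = ∑ x : G, (1 + ∑ k ∈ range n with x ^ p ^ k ≠ 1, ((p : ℤ) ^ (k + 1) - p ^ k)) := by
        rw [psi]
        push_cast
        exact sum_congr rfl fun x _ => cast_orderOf_eq_one_add_sum hp (hx x)
    _ = p ^ n + ∑ k ∈ range n, ∑ x : G with x ^ p ^ k ≠ 1, ((p : ℤ) ^ (k + 1) - p ^ k) := by
        rw [sum_add_distrib, sum_const, card_univ, hG,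
          sum_comm' (t' := range n) (s' := fun k => {x : G | x ^ p ^ k ≠ 1})]
        · simp
        · intro x k
          simp [and_comm]
    _ = _ := by simp only [sum_const, nsmul_eq_mul, hcompl, mul_comm]

-- Linear facts about powers of `p` that let `omega` handle the truncated subtractions below.
theorem pow_chain_of_two_le {p : ℕ} (hp : 2 ≤ p) :
    2 * p ≤ p ^ 2 ∧ 2 * p ^ 2 ≤ p ^ 3 ∧ 2 * p ^ 3 ≤ p ^ 4 ∧ 2 * p ^ 4 ≤ p ^ 5 ∧
      2 * p ^ 5 ≤ p ^ 6 ∧ 2 * p ^ 6 ≤ p ^ 7 ∧ 2 * p ^ 7 ≤ p ^ 8 := by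
  refine ⟨by rw [sq]; exact Nat.mul_le_mul_right p hp, ?_, ?_, ?_, ?_, ?_, ?_⟩ <;>
    exact (Nat.mul_le_mul_right _ hp).trans_eq (pow_succ' p _).symm

section AbelianOfOrderPFour

variable (p : ℕ) [Fact p.Prime]

local notation:max "C" n:max => Multiplicative (ZMod n)

theorem psi_type_1111 : psi (C p × C p × C p × C p) = p ^ 5 - p + 1 := by
  have h : (psi (C p × C p × C p × C p) : ℤ) = p ^ 5 - p + 1 := by
    rw [cast_psi_eq_of_card_eq_prime_pow (n := 4) Fact.out (by simp [ZMod.card]; ring)]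
    simp only [sum_range_succ, sum_range_zero, card_filter_pow_eq_one_prod,
      card_filter_pow_prime_pow_eq_one_zmod_self]
    norm_num
    ring
  simp only [← Nat.cast_pow] at h
  have := pow_chain_of_two_le (Fact.out : p.Prime).two_le
  omega

theorem psi_type_112 : psi (C p × C p × C (p ^ 2)) = p ^ 6 - p ^ 5 + p ^ 4 - p + 1 := by
  have h : (psi (C p × C p × C (p ^ 2)) : ℤ) = p ^ 6 - p ^ 5 + p ^ 4 - p + 1 := by
    rw [cast_psi_eq_of_card_eq_prime_pow (n := 4) Fact.out (by simp [ZMod.card]; ring)]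
    simp only [sum_range_succ, sum_range_zero, card_filter_pow_eq_one_prod,
      card_filter_pow_prime_pow_eq_one_zmod, card_filter_pow_prime_pow_eq_one_zmod_self]
    norm_num
    ring
  simp only [← Nat.cast_pow] at h
  have := pow_chain_of_two_le (Fact.out : p.Prime).two_le
  omega

theorem psi_type_22 : psi (C (p ^ 2) × C (p ^ 2)) = p ^ 6 - p ^ 4 + p ^ 3 - p + 1 := by
  have h : (psi (C (p ^ 2) × C (p ^ 2)) : ℤ) = p ^ 6 - p ^ 4 + p ^ 3 - p + 1 := by
    rw [cast_psi_eq_of_card_eq_prime_pow (n := 4) Fact.out (by simp [ZMod.card]; ring)]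
    simp only [sum_range_succ, sum_range_zero, card_filter_pow_eq_one_prod,
      card_filter_pow_prime_pow_eq_one_zmod]
    norm_num
    ring
  simp only [← Nat.cast_pow] at h
  have := pow_chain_of_two_le (Fact.out : p.Prime).two_le
  omega

theorem psi_type_13 :
    psi (C p × C (p ^ 3)) = p ^ 7 - p ^ 6 + p ^ 5 - p ^ 4 + p ^ 3 - p + 1 := by
  have h : (psi (C p × C (p ^ 3)) : ℤ) = p ^ 7 - p ^ 6 + p ^ 5 - p ^ 4 + p ^ 3 - p + 1 := by
    rw [cast_psi_eq_of_card_eq_prime_pow (n := 4) Fact.out (by simp [ZMod.card]; ring)]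
    simp only [sum_range_succ, sum_range_zero, card_filter_pow_eq_one_prod,
      card_filter_pow_prime_pow_eq_one_zmod, card_filter_pow_prime_pow_eq_one_zmod_self]
    norm_num
    ring
  simp only [← Nat.cast_pow] at h
  have := pow_chain_of_two_le (Fact.out : p.Prime).two_le
  omega

theorem psi_type_4 :
    psi (C (p ^ 4)) = p ^ 8 - p ^ 7 + p ^ 6 - p ^ 5 + p ^ 4 - p ^ 3 + p ^ 2 - p + 1 := by
  have h : (psi (C (p ^ 4)) : ℤ) =
      p ^ 8 - p ^ 7 + p ^ 6 - p ^ 5 + p ^ 4 - p ^ 3 + p ^ 2 - p + 1 := by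
    rw [cast_psi_eq_of_card_eq_prime_pow (p := p) (n := 4) Fact.out (by simp [ZMod.card])]
    simp only [sum_range_succ, sum_range_zero, card_filter_pow_prime_pow_eq_one_zmod]
    norm_num
    ring
  simp only [← Nat.cast_pow] at h
  have := pow_chain_of_two_le (Fact.out : p.Prime).two_le
  omega

end AbelianOfOrderPFour

theorem psi_order_p_fourth (p : ℕ) [Fact p.Prime] :
    psi (Multiplicative (ZMod p) × Multiplicative (ZMod p) × Multiplicative (ZMod p) ×
        Multiplicative (ZMod p)) = p ^ 5 - p + 1 ∧
    psi (Multiplicative (ZMod p) × Multiplicative (ZMod p) × Multiplicative (ZMod (p ^ 2))) =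
      p ^ 6 - p ^ 5 + p ^ 4 - p + 1 ∧
    psi (Multiplicative (ZMod (p ^ 2)) × Multiplicative (ZMod (p ^ 2))) =
      p ^ 6 - p ^ 4 + p ^ 3 - p + 1 ∧
    psi (Multiplicative (ZMod p) × Multiplicative (ZMod (p ^ 3))) =
      p ^ 7 - p ^ 6 + p ^ 5 - p ^ 4 + p ^ 3 - p + 1 ∧
    psi (Multiplicative (ZMod (p ^ 4))) =
      p ^ 8 - p ^ 7 + p ^ 6 - p ^ 5 + p ^ 4 - p ^ 3 + p ^ 2 - p + 1 ∧
    psi (Multiplicative (ZMod p) × Multiplicative (ZMod p) × Multiplicative (ZMod p) ×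
        Multiplicative (ZMod p)) <
      psi (Multiplicative (ZMod p) × Multiplicative (ZMod p) × Multiplicative (ZMod (p ^ 2))) ∧
    psi (Multiplicative (ZMod p) × Multiplicative (ZMod p) × Multiplicative (ZMod (p ^ 2))) <
      psi (Multiplicative (ZMod (p ^ 2)) × Multiplicative (ZMod (p ^ 2))) ∧
    psi (Multiplicative (ZMod (p ^ 2)) × Multiplicative (ZMod (p ^ 2))) <
      psi (Multiplicative (ZMod p) × Multiplicative (ZMod (p ^ 3))) ∧
    psi (Multiplicative (ZMod p) × Multiplicative (ZMod (p ^ 3))) <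
      psi (Multiplicative (ZMod (p ^ 4))) := by
  rw [psi_type_1111, psi_type_112, psi_type_22, psi_type_13, psi_type_4]
  have hp := (Fact.out : p.Prime).two_le
  have := pow_chain_of_two_le hp
  refine ⟨rfl, rfl, rfl, rfl, rfl, ?_, ?_, ?_, ?_⟩ <;> omega
end
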